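/- For fixed γ̄ > 0, N_t ≥ 1, and T > 0, the function R̄(T_p) = (1 − T_p/T) N_t log₂(1 + γ̄(T_p)) is strictly concave in T_p on (0, T) whenever γ̄(T_p) is nonnegative, concave, and nondecreasing in T_p. -/

import Mathlib

/-!
The rate is the product of the prelog factor `(1 - T_p/T) N_t`, which is affine, positive and
strictly decreasing on `(0, T)`, and of `log₂ (1 + γ̄)`, which is concave (a nondecreasing concave
function of a concave one), nonnegative and nondecreasing. A product of nonnegative concave
functions that vary in opposite directions is concave: for `a + b = 1` the chord value
`a f(x) g(x) + b f(y) g(y)` equals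
`(a f(x) + b f(y)) (a g(x) + b g(y)) + a b (f(x) - f(y)) (g(x) - g(y))`, and the cross term is
`≤ 0`, strictly so when both factors are strictly monotone.
-/

open Set

section Composition

variable {𝕜 E β γ : Type*} [Semiring 𝕜] [PartialOrder 𝕜] [AddCommMonoid E] [SMul 𝕜 E]
  [AddCommMonoid β] [PartialOrder β] [SMul 𝕜 β] [AddCommMonoid γ] [PartialOrder γ] [SMul 𝕜 γ]
  {s : Set E} {t : Set β} {f : E → β} {g : β → γ}

theorem ConcaveOn.comp_of_mapsTo (hg : ConcaveOn 𝕜 t g) (hf : ConcaveOn 𝕜 s f)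
    (hg' : MonotoneOn g t) (hst : MapsTo f s t) : ConcaveOn 𝕜 s (g ∘ f) := by
  refine ⟨hf.1, fun x hx y hy a b ha hb hab => ?_⟩
  have hmix : a • f x + b • f y ∈ t := hg.1 (hst hx) (hst hy) ha hb hab
  calc a • g (f x) + b • g (f y) ≤ g (a • f x + b • f y) := hg.2 (hst hx) (hst hy) ha hb hab
    _ ≤ g (f (a • x + b • y)) := hg' hmix (hst (hf.1 hx hy ha hb hab)) (hf.2 hx hy ha hb hab)

end Composition

theorem Real.concaveOn_logb_Ioi {b : ℝ} (hb : 1 ≤ b) : ConcaveOn ℝ (Ioi 0) (Real.logb b) :=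
  (strictConcaveOn_log_Ioi.concaveOn.smul (inv_nonneg.2 (Real.log_nonneg hb))).congr
    fun x _ => by simp only [smul_eq_mul, Real.logb, div_eq_inv_mul]

section StrictProduct

variable {𝕜 : Type*} [Field 𝕜] [LinearOrder 𝕜] [IsStrictOrderedRing 𝕜] {s : Set 𝕜} {f g : 𝕜 → 𝕜}

theorem ConcaveOn.strictConcaveOn_mul (hf : ConcaveOn 𝕜 s f) (hg : ConcaveOn 𝕜 s g)
    (hf₀ : ∀ x ∈ s, 0 ≤ f x) (hg₀ : ∀ x ∈ s, 0 ≤ g x) (hf' : StrictAntiOn f s)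
    (hg' : StrictMonoOn g s) : StrictConcaveOn 𝕜 s (f * g) := by
  refine ⟨hf.1, fun x hx y hy hxy a b ha hb hab => ?_⟩
  have hcross : (f x - f y) * (g x - g y) < 0 := by
    rcases hxy.lt_or_gt with h | h
    · exact mul_neg_of_pos_of_neg (sub_pos.2 (hf' hx hy h)) (sub_neg.2 (hg' hx hy h))
    · exact mul_neg_of_neg_of_pos (sub_neg.2 (hf' hy hx h)) (sub_pos.2 (hg' hy hx h))
  have hz := hf.1 hx hy ha.le hb.le hab
  simp only [Pi.mul_apply, smul_eq_mul] at hz ⊢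
  calc a * (f x * g x) + b * (f y * g y)
      = (a * f x + b * f y) * (a * g x + b * g y) + a * b * ((f x - f y) * (g x - g y)) := by
        have hb' : b = 1 - a := by linear_combination hab
        subst hb'; ring
    _ < (a * f x + b * f y) * (a * g x + b * g y) :=
        add_lt_of_neg_right _ (mul_neg_of_pos_of_neg (mul_pos ha hb) hcross)
    _ ≤ f (a * x + b * y) * g (a * x + b * y) := by
        have hfz := hf.2 hx hy ha.le hb.le hab
        have hgz := hg.2 hx hy ha.le hb.le hab
        simp only [smul_eq_mul] at hfz hgz
        exact mul_le_mul hfz hgz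
          (add_nonneg (mul_nonneg ha.le (hg₀ x hx)) (mul_nonneg hb.le (hg₀ y hy))) (hf₀ _ hz)

end StrictProduct

/-- If γ̄ : (0,T) → [0,∞) is concave and nondecreasing, then
    R̄(T_p) = (1 − T_p/T)·N_t·log₂(1+γ̄(T_p)) is concave on (0,T); it is strictly
    concave if γ̄ is strictly increasing. -/
theorem rate_concave_in_training (T Nt : ℝ) (hT : 0 < T) (hNt : 1 ≤ Nt)
    (γ : ℝ → ℝ) (hγ0 : ∀ x ∈ Ioo 0 T, 0 ≤ γ x)
    (hγconc : ConcaveOn ℝ (Ioo 0 T) γ) (hγmono : MonotoneOn γ (Ioo 0 T)) :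
    ConcaveOn ℝ (Ioo 0 T)
      (fun Tp => (1 - Tp / T) * Nt * Real.logb 2 (1 + γ Tp)) ∧
    (StrictMonoOn γ (Ioo 0 T) →
      StrictConcaveOn ℝ (Ioo 0 T)
        (fun Tp => (1 - Tp / T) * Nt * Real.logb 2 (1 + γ Tp))) := by
  have hsnr_pos : MapsTo (fun Tp => 1 + γ Tp) (Ioo 0 T) (Ioi 0) := fun x hx => by
    simp only [mem_Ioi]; linarith [hγ0 x hx]
  have hfactor_conc : ConcaveOn ℝ (Ioo 0 T) (fun Tp => (1 - Tp / T) * Nt) :=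
    ⟨convex_Ioo 0 T, fun x _ y _ a b _ _ hab => le_of_eq (by
      simp only [smul_eq_mul]; linear_combination Nt * hab)⟩
  have hfactor_anti : StrictAntiOn (fun Tp => (1 - Tp / T) * Nt) (Ioo 0 T) :=
    fun x _ y _ hxy => by dsimp only; gcongr
  have hfactor_nonneg : ∀ x ∈ Ioo 0 T, 0 ≤ (1 - x / T) * Nt := fun x hx =>
    mul_nonneg (sub_nonneg.2 ((div_le_one hT).2 hx.2.le)) (by linarith)
  have hlog_conc : ConcaveOn ℝ (Ioo 0 T) (fun Tp => Real.logb 2 (1 + γ Tp)) :=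
    (Real.concaveOn_logb_Ioi one_le_two).comp_of_mapsTo
      ((concaveOn_const 1 (convex_Ioo 0 T)).add hγconc)
      (Real.strictMonoOn_logb one_lt_two).monotoneOn hsnr_pos
  have hlog_nonneg : ∀ x ∈ Ioo 0 T, 0 ≤ Real.logb 2 (1 + γ x) := fun x hx =>
    Real.logb_nonneg one_lt_two (by linarith [hγ0 x hx])
  have hlog_mono : MonotoneOn (fun Tp => Real.logb 2 (1 + γ Tp)) (Ioo 0 T) :=
    (Real.strictMonoOn_logb one_lt_two).monotoneOn.comp (hγmono.const_add 1) hsnr_pos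
  refine ⟨hfactor_conc.mul hlog_conc hfactor_nonneg hlog_nonneg
    (hfactor_anti.antitoneOn.antivaryOn hlog_mono), fun hγstrict => ?_⟩
  exact hfactor_conc.strictConcaveOn_mul hlog_conc hfactor_nonneg hlog_nonneg hfactor_anti
    ((Real.strictMonoOn_logb one_lt_two).comp (hγstrict.const_add 1) hsnr_pos)
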